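/- arXiv:2007.05210 — 7 statements merged into one kernel-verified Lean document; each statement's English description precedes it below -/
import Mathlib

section
/- A pseudocompact c_c-realcompact space is compact. That is, if X is a topological space in which every continuous real-valued function is bounded, and every c-stable family of closed sets in X with the finite intersection property has nonempty intersection, then X is compact. -/
open Set

def CStable {X : Type*} [TopologicalSpace X] (F : Set (Set X)) : Prop :=
  ∀ f : C(X, ℤ), ∃ F₀ ∈ F, ∃ n : ℕ, ∀ x ∈ F₀, |f x| ≤ (n : ℤ)

def FIP {X : Type*} (F : Set (Set X)) : Prop :=
  ∀ S : Finset (Set X), ↑S ⊆ F → (⋂₀ (S : Set (Set X))).Nonempty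

def CcRealcompact (X : Type*) [TopologicalSpace X] : Prop :=
  ∀ F : Set (Set X), (∀ A ∈ F, IsClosed A) → CStable F → FIP F → (⋂₀ F).Nonempty

/-! A pseudocompact space carries no unbounded continuous integer-valued function, so every
nonempty family of subsets is c-stable. Hence c_c-realcompactness says that every family of
closed sets with the finite intersection property has nonempty intersection, which is
compactness. -/

section

variable {X : Type*}

theorem FIP.nonempty_univ {F : Set (Set X)} (hF : FIP F) : (univ : Set X).Nonempty := by
  simpa using hF ∅ (by simp)

theorem FIP.range_of_iInter_nonempty {ι : Type*} {t : ι → Set X}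
    (ht : ∀ u : Finset ι, (⋂ i ∈ u, t i).Nonempty) : FIP (range t) := by
  classical
  intro S hS
  rw [← image_univ] at hS
  obtain ⟨u, -, rfl⟩ := Finset.subset_set_image_iff.mp hS
  simpa [Finset.coe_image, sInter_image] using ht u

theorem compactSpace_of_fip_sInter_nonempty [TopologicalSpace X]
    (h : ∀ F : Set (Set X), (∀ A ∈ F, IsClosed A) → FIP F → (⋂₀ F).Nonempty) :
    CompactSpace X := by
  refine compactSpace_of_finite_subfamily_closed fun t htc hempty => ?_
  by_contra! hfin
  have hne := h (range t) (forall_mem_range.mpr htc) (.range_of_iInter_nonempty hfin)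
  rw [sInter_range, hempty] at hne
  exact not_nonempty_empty hne

theorem exists_abs_le_of_pseudocompact [TopologicalSpace X]
    (hpseudo : ∀ f : C(X, ℝ), ∃ M : ℝ, ∀ x, |f x| ≤ M) (f : C(X, ℤ)) :
    ∃ n : ℕ, ∀ x, |f x| ≤ (n : ℤ) := by
  obtain ⟨M, hM⟩ := hpseudo ⟨fun x => (f x : ℝ), by fun_prop⟩
  refine ⟨⌈M⌉₊, fun x => ?_⟩
  have hx : ((|f x| : ℤ) : ℝ) ≤ M := by simpa using hM x
  exact_mod_cast hx.trans (Nat.le_ceil M)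

theorem CStable.of_nonempty [TopologicalSpace X]
    (hbdd : ∀ f : C(X, ℤ), ∃ n : ℕ, ∀ x, |f x| ≤ (n : ℤ)) {F : Set (Set X)} (hF : F.Nonempty) :
    CStable F := fun f =>
  let ⟨F₀, hF₀⟩ := hF
  let ⟨n, hn⟩ := hbdd f
  ⟨F₀, hF₀, n, fun x _ => hn x⟩

theorem CcRealcompact.sInter_nonempty_of_pseudocompact [TopologicalSpace X]
    (hcc : CcRealcompact X) (hpseudo : ∀ f : C(X, ℝ), ∃ M : ℝ, ∀ x, |f x| ≤ M)
    {F : Set (Set X)} (hclosed : ∀ A ∈ F, IsClosed A) (hfip : FIP F) : (⋂₀ F).Nonempty := by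
  rcases F.eq_empty_or_nonempty with rfl | hF
  · simpa using hfip.nonempty_univ
  · exact hcc F hclosed (.of_nonempty (exists_abs_le_of_pseudocompact hpseudo) hF) hfip

end

/-- A pseudocompact c_c-realcompact space is compact. -/
theorem pseudocompact_cc_realcompact_implies_compact {X : Type*} [TopologicalSpace X]
    (hpseudo : ∀ f : C(X, ℝ), ∃ M : ℝ, ∀ x, |f x| ≤ M)
    (hcc : CcRealcompact X) : CompactSpace X :=
  compactSpace_of_fip_sInter_nonempty fun _ hclosed hfip =>
    hcc.sInter_nonempty_of_pseudocompact hpseudo hclosed hfip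
end

section
/- A closed subspace of a c_c-realcompact space is c_c-realcompact. -/
open Set

/-!
Push a c-stable closed family with the finite intersection property on the closed subspace
forward to the ambient space: images of closed sets stay closed, an integer-valued function
restricts to the subspace, and finite intersections map into intersections of the images.
Since the inclusion is injective, a point in the intersection of the images comes from a point
in the intersection of the family.
-/

open Function Topology

section

variable {X Y : Type*}

theorem FIP.image {F : Set (Set Y)} (hF : FIP F) (g : Y → X) : FIP ((g '' ·) '' F) := by
  classical
  intro S hS
  obtain ⟨S', hS'F, rfl⟩ := Finset.subset_set_image_iff.mp hS
  obtain ⟨y, hy⟩ := hF S' hS'F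
  refine ⟨g y, ?_⟩
  rw [Finset.coe_image, sInter_image, mem_iInter₂]
  exact fun B hB => mem_image_of_mem g (hy B hB)

theorem CStable.image [TopologicalSpace X] [TopologicalSpace Y] {F : Set (Set Y)}
    (hF : CStable F) (g : C(Y, X)) : CStable ((g '' ·) '' F) := by
  intro f
  obtain ⟨B, hB, n, hn⟩ := hF (f.comp g)
  exact ⟨g '' B, mem_image_of_mem _ hB, n, forall_mem_image.2 hn⟩

theorem Function.Injective.image_sInter_eq {g : Y → X} (hg : Injective g) {F : Set (Set Y)}
    (hF : F.Nonempty) : g '' ⋂₀ F = ⋂₀ ((g '' ·) '' F) := by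
  rw [sInter_image, sInter_eq_biInter, hg.injOn.image_biInter_eq hF]

theorem Topology.IsClosedEmbedding.ccRealcompact [TopologicalSpace X] [TopologicalSpace Y]
    {g : Y → X} (hg : IsClosedEmbedding g) (hX : CcRealcompact X) : CcRealcompact Y := by
  intro F hclosed hcs hfip
  rcases F.eq_empty_or_nonempty with rfl | hne
  · simpa using hfip ∅ (by simp)
  have himage : (⋂₀ ((g '' ·) '' F)).Nonempty :=
    hX _ (forall_mem_image.2 fun B hB => hg.isClosedMap B (hclosed B hB))
      (hcs.image ⟨g, hg.continuous⟩) (hfip.image g)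
  rw [← hg.injective.image_sInter_eq hne] at himage
  exact himage.of_image

end

/-- A closed subspace of a c_c-realcompact space is c_c-realcompact. -/
theorem closed_subspace_cc_realcompact {X : Type*} [TopologicalSpace X]
    (hcc : CcRealcompact X) (A : Set X) (hA : IsClosed A) :
    CcRealcompact A :=
  hA.isClosedEmbedding_subtypeVal.ccRealcompact hcc
end

section
/- An arbitrary product of c_c-realcompact spaces is c_c-realcompact. -/
open Set

/-!
A family of closed sets with the finite intersection property lies in an ultrafilter `U`,
and `U` is c-stable as soon as the family is. So it suffices that every c-stable ultrafilter
converges. On a c_c-realcompact space it does: its closed members form a c-stable family with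
the finite intersection property, whose common point is a cluster point, hence a limit, of `U`.
On a product, c-stability passes to the coordinate images of `U`, which therefore converge,
and an ultrafilter on a product converges as soon as all its coordinate images do.
-/

open Filter Topology

section

variable {X Y : Type*} [TopologicalSpace X] [TopologicalSpace Y]

theorem CStable.mono {F G : Set (Set X)} (hF : CStable F) (hFG : F ⊆ G) : CStable G := fun f ↦
  let ⟨A, hA, hbdd⟩ := hF f
  ⟨A, hFG hA, hbdd⟩

theorem CStable.map {l : Filter X} (hl : CStable l.sets) {g : X → Y} (hg : Continuous g) :
    CStable (l.map g).sets := by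
  intro f
  obtain ⟨A, hA, n, hn⟩ := hl (f.comp ⟨g, hg⟩)
  refine ⟨g '' A, image_mem_map hA, n, ?_⟩
  rintro _ ⟨x, hx, rfl⟩
  exact hn x hx

theorem CStable.setOf_isClosed_mem {l : Filter X} (hl : CStable l.sets) :
    CStable {A | IsClosed A ∧ A ∈ l} := by
  intro f
  obtain ⟨A, hA, n, hn⟩ := hl f
  have hbdd_closed : IsClosed {x | |f x| ≤ (n : ℤ)} :=
    (isClosed_discrete {m : ℤ | |m| ≤ (n : ℤ)}).preimage f.continuous
  exact ⟨closure A, ⟨isClosed_closure, mem_of_superset hA subset_closure⟩, n,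
    fun x hx ↦ closure_minimal hn hbdd_closed hx⟩

end

theorem FIP.generate_neBot {X : Type*} {F : Set (Set X)} (hF : FIP F) :
    (generate F).NeBot := by
  rw [generate_neBot_iff]
  intro S hSF hS
  simpa [hS.coe_toFinset] using hF hS.toFinset (by simpa [hS.coe_toFinset] using hSF)

theorem fip_of_subset_sets {X : Type*} {l : Filter X} [l.NeBot] {F : Set (Set X)}
    (hF : F ⊆ l.sets) : FIP F := fun S hS ↦
  nonempty_of_mem <| (sInter_mem S.finite_toSet).2 fun _ hA ↦ hF (hS hA)

theorem CcRealcompact.exists_le_nhds {X : Type*} [TopologicalSpace X] (hX : CcRealcompact X)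
    (U : Ultrafilter X) (hU : CStable (↑U : Filter X).sets) : ∃ x, (↑U : Filter X) ≤ 𝓝 x := by
  obtain ⟨x, hx⟩ := hX {A | IsClosed A ∧ A ∈ U} (fun _ hA ↦ hA.1) hU.setOf_isClosed_mem
    (fip_of_subset_sets fun _ hA ↦ hA.2)
  refine ⟨x, U.clusterPt_iff.1 (clusterPt_iff_forall_mem_closure.2 fun A hA ↦ ?_)⟩
  exact hx _ ⟨isClosed_closure, mem_of_superset hA subset_closure⟩

theorem ccRealcompact_of_forall_ultrafilter {X : Type*} [TopologicalSpace X]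
    (h : ∀ U : Ultrafilter X, CStable (↑U : Filter X).sets → ∃ x, (↑U : Filter X) ≤ 𝓝 x) :
    CcRealcompact X := by
  intro F hclosed hstab hfip
  have := hfip.generate_neBot
  let U := Ultrafilter.of (generate F)
  have hFU : F ⊆ (↑U : Filter X).sets := fun A hA ↦
    Ultrafilter.of_le (generate F) (mem_generate_of_mem hA)
  obtain ⟨x, hx⟩ := h U (hstab.mono hFU)
  exact ⟨x, fun A hA ↦ (hclosed A hA).mem_of_tendsto hx (hFU hA)⟩

/-- An arbitrary product of c_c-realcompact spaces is c_c-realcompact. -/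
theorem prod_cc_realcompact {I : Type*} {X : I → Type*} [∀ i, TopologicalSpace (X i)]
    (hcc : ∀ i, CcRealcompact (X i)) : CcRealcompact (∀ i, X i) := by
  refine ccRealcompact_of_forall_ultrafilter fun U hU ↦ ?_
  have hconv i : ∃ x, map (fun y ↦ y i) (↑U : Filter (∀ i, X i)) ≤ 𝓝 x :=
    (hcc i).exists_le_nhds (U.map fun y : ∀ i, X i ↦ y i) (hU.map (continuous_apply i))
  choose x hx using hconv
  exact ⟨x, by rw [nhds_pi, le_pi]; exact hx⟩
end

section
/- If a topological space X equals E ∪ F where E is compact and F is a ℤ-embedded c_c-realcompact subspace of X (every continuous map F → ℤ extends to a continuous map X → ℤ), then X is c_c-realcompact. -/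
open Set

/-!
Let `𝒢` be a closed, c-stable family with the finite intersection property. If every finite
subfamily of `𝒢` meets `E`, compactness of `E` gives a point of `⋂₀ 𝒢`. Otherwise some finite
intersection `⋂₀ 𝒜₀` misses `E`, hence lies in `F`, and then every finite intersection meets `F`.
The traces on `F` of the members of `𝒢` form a closed family with the finite intersection property,
and it is c-stable because every continuous `F → ℤ` extends to `X`; c_c-realcompactness of `F`
then gives a point of `⋂₀ 𝒢`.
-/

theorem fip_iff_finite_subsets {X : Type*} {𝒢 : Set (Set X)} :
    FIP 𝒢 ↔ ∀ 𝒜 ⊆ 𝒢, 𝒜.Finite → (⋂₀ 𝒜).Nonempty := by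
  refine ⟨fun h 𝒜 h𝒜 hfin => ?_, fun h S hS => h S hS S.finite_toSet⟩
  simpa using h hfin.toFinset (by simpa using h𝒜)

theorem CStable.preimage {X Y : Type*} [TopologicalSpace X] [TopologicalSpace Y]
    {𝒢 : Set (Set X)} (h𝒢 : CStable 𝒢) (e : Y → X)
    (hext : ∀ f : C(Y, ℤ), ∃ g : C(X, ℤ), ∀ y, g (e y) = f y) :
    CStable ((e ⁻¹' ·) '' 𝒢) := by
  intro f
  obtain ⟨g, hg⟩ := hext f
  obtain ⟨A, hA, n, hn⟩ := h𝒢 g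
  exact ⟨e ⁻¹' A, mem_image_of_mem _ hA, n, fun y hy => hg y ▸ hn (e y) hy⟩

theorem CcRealcompact.nonempty_inter_sInter {X : Type*} [TopologicalSpace X] {F : Set X}
    (hF : CcRealcompact F) (hZemb : ∀ f : C(F, ℤ), ∃ g : C(X, ℤ), ∀ x : F, g x = f x)
    {𝒢 : Set (Set X)} (hclosed : ∀ A ∈ 𝒢, IsClosed A) (hstable : CStable 𝒢)
    (hmeets : ∀ 𝒜 ⊆ 𝒢, 𝒜.Finite → (F ∩ ⋂₀ 𝒜).Nonempty) : (F ∩ ⋂₀ 𝒢).Nonempty := by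
  classical
  set ℋ : Set (Set F) := (Subtype.val ⁻¹' ·) '' 𝒢
  have hℋclosed : ∀ B ∈ ℋ, IsClosed B := by
    rintro _ ⟨A, hA, rfl⟩
    exact (hclosed A hA).preimage continuous_subtype_val
  have hℋfip : FIP ℋ := by
    intro T hT
    obtain ⟨S, hS𝒢, rfl⟩ := Finset.subset_set_image_iff.mp hT
    obtain ⟨x, hxF, hx⟩ := hmeets S hS𝒢 S.finite_toSet
    refine ⟨⟨x, hxF⟩, ?_⟩
    rw [Finset.coe_image, sInter_image, ← preimage_sInter]
    exact hx
  obtain ⟨y, hy⟩ := hF ℋ hℋclosed (hstable.preimage _ hZemb) hℋfip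
  exact ⟨y, y.2, fun A hA => hy _ (mem_image_of_mem _ hA)⟩

/-- If X = E ∪ F with E compact and F a ℤ-embedded c_c-realcompact subspace,
then X is c_c-realcompact. -/
theorem union_compact_zembedded_cc_realcompact {X : Type*} [TopologicalSpace X]
    (E F : Set X) (hunion : E ∪ F = univ) (hE : IsCompact E)
    (hZemb : ∀ f : C(F, ℤ), ∃ g : C(X, ℤ), ∀ x : F, g x = f x)
    (hF : CcRealcompact F) : CcRealcompact X := by
  intro 𝒢 hclosed hstable hfip
  rw [fip_iff_finite_subsets] at hfip
  by_cases hE_meets : ∀ 𝒜 ⊆ 𝒢, 𝒜.Finite → (E ∩ ⋂₀ 𝒜).Nonempty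
  · obtain ⟨x, -, hx⟩ := hE.nonempty_inter_sInter hclosed hE_meets
    exact ⟨x, hx⟩
  push Not at hE_meets
  obtain ⟨𝒜₀, h𝒜₀, h𝒜₀fin, h𝒜₀E⟩ := hE_meets
  have hF_meets : ∀ 𝒜 ⊆ 𝒢, 𝒜.Finite → (F ∩ ⋂₀ 𝒜).Nonempty := by
    intro 𝒜 h𝒜 hfin
    obtain ⟨x, hx𝒜, hx𝒜₀⟩ := sInter_union 𝒜 𝒜₀ ▸
      hfip (𝒜 ∪ 𝒜₀) (union_subset h𝒜 h𝒜₀) (hfin.union h𝒜₀fin)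
    have hxE : x ∉ E := fun hxE => h𝒜₀E.subset ⟨hxE, hx𝒜₀⟩
    exact ⟨x, (hunion.ge (mem_univ x)).resolve_left hxE, hx𝒜⟩
  obtain ⟨x, -, hx⟩ := hF.nonempty_inter_sInter hZemb hclosed hstable hF_meets
  exact ⟨x, hx⟩
end

section
/- A ℤ-embedded c_c-realcompact subset of a Hausdorff space is closed. -/
open Set

/-!
Let `p ∈ closure A`. The traces on `A` of the closures of the neighbourhoods of `p` form a family
of closed subsets of `A` with the finite intersection property. It is c-stable: a continuous
`f : A → ℤ` extends to some `g : X → ℤ`, and the fibre of `g` through `p` is a clopen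
neighbourhood of `p` whose trace on `A` is bounded under `f`. By c_c-realcompactness some `a ∈ A`
lies in the closure of every neighbourhood of `p`, and in a Hausdorff space this forces `a = p`.
-/

open Topology

section

variable {X : Type*} [TopologicalSpace X]

theorem eq_of_forall_mem_closure_nhds [T2Space X] {a p : X}
    (h : ∀ V ∈ 𝓝 p, a ∈ closure V) : a = p := by
  by_contra hne
  exact (clusterPt_iff_forall_mem_closure.2 h).ne (disjoint_nhds_nhds.2 hne).eq_bot

def traceClosureNhds (A : Set X) (p : X) : Set (Set A) :=
  {s | ∃ V ∈ 𝓝 p, (↑) ⁻¹' closure V = s}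

namespace traceClosureNhds

variable {A : Set X} {p : X}

theorem isClosed {s : Set A} (hs : s ∈ traceClosureNhds A p) : IsClosed s := by
  obtain ⟨V, -, rfl⟩ := hs
  exact isClosed_closure.preimage continuous_subtype_val

theorem fip (hp : p ∈ closure A) : FIP (traceClosureNhds A p) := by
  intro S hS
  choose! V hV hVs using fun s (hs : s ∈ (S : Set (Set A))) => hS hs
  have hW : (⋂ s ∈ S, V s) ∈ 𝓝 p := (Filter.biInter_finset_mem S).2 hV
  obtain ⟨a, haW, haA⟩ := mem_closure_iff_nhds.1 hp _ hW
  refine ⟨⟨a, haA⟩, fun s hs => ?_⟩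
  rw [← hVs s hs]
  exact subset_closure (mem_iInter₂.1 haW s hs)

theorem cStable (hZemb : ∀ f : C(A, ℤ), ∃ g : C(X, ℤ), ∀ x : A, g x = f x) :
    CStable (traceClosureNhds A p) := by
  intro f
  obtain ⟨g, hg⟩ := hZemb f
  have hfibre : IsClopen (g ⁻¹' {g p}) := (isClopen_discrete _).preimage g.continuous
  refine ⟨(↑) ⁻¹' closure (g ⁻¹' {g p}), ⟨_, hfibre.isOpen.mem_nhds rfl, rfl⟩,
    (g p).natAbs, fun x hx => ?_⟩
  rw [mem_preimage, hfibre.isClosed.closure_eq, mem_preimage, mem_singleton_iff, hg] at hx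
  rw [hx, Int.natCast_natAbs]

theorem eq_of_mem_sInter [T2Space X] {a : A} (ha : a ∈ ⋂₀ traceClosureNhds A p) :
    (a : X) = p :=
  eq_of_forall_mem_closure_nhds fun V hV => ha _ ⟨V, hV, rfl⟩

end traceClosureNhds

end

/-- A ℤ-embedded c_c-realcompact subset of a Hausdorff space is closed. -/
theorem zembedded_cc_realcompact_isClosed {X : Type*} [TopologicalSpace X] [T2Space X]
    (A : Set X)
    (hZemb : ∀ f : C(A, ℤ), ∃ g : C(X, ℤ), ∀ x : A, g x = f x)
    (hA : CcRealcompact A) : IsClosed A := by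
  refine isClosed_of_closure_subset fun p hp => ?_
  obtain ⟨a, ha⟩ := hA (traceClosureNhds A p) (fun _ => traceClosureNhds.isClosed)
    (traceClosureNhds.cStable hZemb) (traceClosureNhds.fip hp)
  rw [← traceClosureNhds.eq_of_mem_sInter ha]
  exact a.2
end

section
/- Let t : X → Y be continuous and let G be a c-stable family of closed subsets of X with the finite intersection property. Then H = {G closed in Y : t⁻¹(G) contains some member of G} is a c-stable family of closed subsets of Y with the finite intersection property. -/
open Set

/-- Pushing forward a c-stable family with the finite intersection property
along a continuous map. -/
theorem pushforward_cStable_fip {X Y : Type*} [TopologicalSpace X] [TopologicalSpace Y]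
    (t : C(X, Y)) (𝒢 : Set (Set X)) (hclosed : ∀ A ∈ 𝒢, IsClosed A)
    (hstable : CStable 𝒢) (hfip : FIP 𝒢) :
    CStable {G : Set Y | IsClosed G ∧ ∃ F ∈ 𝒢, F ⊆ t ⁻¹' G} ∧
    FIP {G : Set Y | IsClosed G ∧ ∃ F ∈ 𝒢, F ⊆ t ⁻¹' G} := by
  constructor
  · intro f
    obtain ⟨F₀, hF₀, n, hn⟩ := hstable (f.comp t)
    refine ⟨{y | |f y| ≤ (n : ℤ)}, ⟨?_, F₀, hF₀, fun x hx => hn x hx⟩, n, fun y hy => hy⟩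
    have : {y | |f y| ≤ (n : ℤ)} = f ⁻¹' {m : ℤ | |m| ≤ (n : ℤ)} := rfl
    rw [this]
    exact (isClosed_discrete _).preimage f.continuous
  · intro S hS
    classical
    choose! F hF hFsub using fun G (hG : G ∈ {G : Set Y | IsClosed G ∧ ∃ F ∈ 𝒢, F ⊆ t ⁻¹' G}) => hG.2
    have hS' : ∀ G ∈ S, G ∈ {G : Set Y | IsClosed G ∧ ∃ F ∈ 𝒢, F ⊆ t ⁻¹' G} :=
      fun G hG => hS hG
    obtain ⟨x, hx⟩ := hfip (S.image (fun G => F G)) (by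
      intro A hA
      simp only [Finset.coe_image, Set.mem_image] at hA
      obtain ⟨G, hG, rfl⟩ := hA
      exact hF G (hS' G hG))
    refine ⟨t x, ?_⟩
    intro G hG
    have hG' : G ∈ S := by exact_mod_cast hG
    have : x ∈ F G := hx _ (by
      simp only [Finset.coe_image, Set.mem_image]
      exact ⟨G, hG', rfl⟩)
    exact hFsub G (hS' G hG') this
end

section
/- Let θ be an infinite cardinal and suppose X is not finally θ-compact. Let B be a family of closed sets such that all subfamilies of cardinality < θ have nonempty intersection but ∩B = ∅, and let D be the family of all intersections of fewer than θ members of B. Then D is a c_{P_θ}-stable family of closed sets with the finite intersection property and empty intersection, where P_θ is the ideal of closed finally θ-compact subsets of X. Consequently X is not c_{P_θ}-compact. -/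
open Set

universe u

def FinallyCompact (θ : Cardinal.{u}) (X : Type u) [TopologicalSpace X] : Prop :=
  ∀ 𝒰 : Set (Set X), (∀ U ∈ 𝒰, IsOpen U) → ⋃₀ 𝒰 = univ →
    ∃ 𝒱 ⊆ 𝒰, Cardinal.mk 𝒱 < θ ∧ ⋃₀ 𝒱 = univ

def CPStable {X : Type*} [TopologicalSpace X] (P : Set (Set X)) (F : Set (Set X)) : Prop :=
  ∀ f : C(X, ℤ), closure {x | f x ≠ 0} ∈ P → ∃ F₀ ∈ F, ∃ n : ℕ, ∀ x ∈ F₀, |f x| ≤ (n : ℤ)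

def CPCompact {X : Type*} [TopologicalSpace X] (P : Set (Set X)) : Prop :=
  ∀ F : Set (Set X), (∀ A ∈ F, IsClosed A) → CPStable P F → FIP F → (⋂₀ F).Nonempty

/-- The ideal of closed, finally θ-compact subsets of `X`. -/
def Ptheta (θ : Cardinal.{u}) (X : Type u) [TopologicalSpace X] : Set (Set X) :=
  {A : Set X | IsClosed A ∧ FinallyCompact θ A}

/-!
Every member of `D` is an intersection of fewer than `θ` closed sets of `B`, hence closed; since
`θ` is infinite, `D` is closed under finite intersections, so its finite intersection property is
the hypothesis on small subfamilies of `B`, and `⋂₀ D = ⋂₀ B = ∅`. For stability, let `f` have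
finally `θ`-compact support closure `K`. The complements of the members of `B` cover `K`, so fewer
than `θ` of them do; their intersection is a member of `D` disjoint from `K`, on which `f`
vanishes. A `c_{P_θ}`-compact space would give `D` a common point.
-/

namespace FinallyCompact

variable {θ : Cardinal.{u}} {X : Type u} [TopologicalSpace X]

theorem exists_iUnion_eq_univ {ι : Type u} (hX : FinallyCompact θ X) (U : ι → Set X)
    (hU : ∀ i, IsOpen (U i)) (hcov : ⋃ i, U i = univ) :
    ∃ s : Set ι, Cardinal.mk s < θ ∧ ⋃ i ∈ s, U i = univ := by
  obtain ⟨𝒱, h𝒱U, h𝒱card, h𝒱cov⟩ :=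
    hX (range U) (forall_mem_range.2 hU) (by rwa [sUnion_range])
  choose index hindex using fun V : 𝒱 => h𝒱U V.2
  refine ⟨range index, Cardinal.mk_range_le.trans_lt h𝒱card, eq_univ_of_forall fun x => ?_⟩
  obtain ⟨V, hV, hxV⟩ := mem_sUnion.1 (h𝒱cov ▸ mem_univ x)
  exact mem_biUnion (mem_range_self ⟨V, hV⟩) (by rwa [hindex ⟨V, hV⟩])

theorem exists_disjoint_sInter {K : Set X} (hK : FinallyCompact θ K) {B : Set (Set X)}
    (hB : ∀ A ∈ B, IsClosed A) (hKB : Disjoint K (⋂₀ B)) :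
    ∃ B₀ ⊆ B, Cardinal.mk B₀ < θ ∧ Disjoint K (⋂₀ B₀) := by
  have hcov : ⋃ A : B, ((↑) ⁻¹' (A : Set X)ᶜ : Set K) = univ := by
    refine eq_univ_of_forall fun x => ?_
    obtain ⟨A, hA, hxA⟩ : ∃ A ∈ B, (x : X) ∉ A := by
      simpa only [mem_sInter, not_forall, exists_prop] using hKB.notMem_of_mem_left x.2
    exact mem_iUnion.2 ⟨⟨A, hA⟩, hxA⟩
  obtain ⟨s, hscard, hscov⟩ := hK.exists_iUnion_eq_univ _
    (fun A : B => (hB A A.2).isOpen_compl.preimage continuous_subtype_val) hcov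
  refine ⟨(↑) '' s, Subtype.coe_image_subset B s, Cardinal.mk_image_le.trans_lt hscard,
    disjoint_left.2 fun x hxK hx => ?_⟩
  obtain ⟨A, hAs, hxA⟩ := mem_iUnion₂.1 (hscov ▸ mem_univ (⟨x, hxK⟩ : K))
  exact hxA (hx A (mem_image_of_mem _ hAs))

end FinallyCompact

def smallSInters {X : Type u} (θ : Cardinal.{u}) (B : Set (Set X)) : Set (Set X) :=
  {A | ∃ B₀ ⊆ B, Cardinal.mk B₀ < θ ∧ A = ⋂₀ B₀}

section smallSInters

variable {θ : Cardinal.{u}} {X : Type u} {B : Set (Set X)}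

theorem sInter_mem_smallSInters {B₀ : Set (Set X)} (hB₀ : B₀ ⊆ B) (hcard : Cardinal.mk B₀ < θ) :
    ⋂₀ B₀ ∈ smallSInters θ B :=
  ⟨B₀, hB₀, hcard, rfl⟩

theorem isClosed_of_mem_smallSInters [TopologicalSpace X] (hB : ∀ A ∈ B, IsClosed A) :
    ∀ A ∈ smallSInters θ B, IsClosed A := by
  rintro _ ⟨B₀, hB₀, -, rfl⟩
  exact isClosed_sInter fun A hA => hB A (hB₀ hA)

theorem inter_mem_smallSInters (hθ : Cardinal.aleph0 ≤ θ) {A₁ A₂ : Set X}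
    (h₁ : A₁ ∈ smallSInters θ B) (h₂ : A₂ ∈ smallSInters θ B) :
    A₁ ∩ A₂ ∈ smallSInters θ B := by
  obtain ⟨B₁, hB₁, hcard₁, rfl⟩ := h₁
  obtain ⟨B₂, hB₂, hcard₂, rfl⟩ := h₂
  rw [← sInter_union]
  exact sInter_mem_smallSInters (union_subset hB₁ hB₂)
    ((Cardinal.mk_union_le _ _).trans_lt (Cardinal.add_lt_of_lt hθ hcard₁ hcard₂))

theorem sInter_finset_mem_smallSInters (hθ : Cardinal.aleph0 ≤ θ) (S : Finset (Set X))
    (hS : ↑S ⊆ smallSInters θ B) : ⋂₀ (S : Set (Set X)) ∈ smallSInters θ B := by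
  classical
  induction S using Finset.induction_on with
  | empty =>
    simpa using sInter_mem_smallSInters (empty_subset B)
      (by simpa using Cardinal.aleph0_pos.trans_le hθ)
  | insert A S _ ih =>
    rw [Finset.coe_insert, insert_subset_iff] at hS
    rw [Finset.coe_insert, sInter_insert]
    exact inter_mem_smallSInters hθ hS.1 (ih hS.2)

theorem fip_smallSInters (hθ : Cardinal.aleph0 ≤ θ)
    (hB : ∀ B₀ ⊆ B, Cardinal.mk B₀ < θ → (⋂₀ B₀).Nonempty) : FIP (smallSInters θ B) := by
  intro S hS
  obtain ⟨B₀, hB₀, hcard, hS_eq⟩ := sInter_finset_mem_smallSInters hθ S hS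
  exact hS_eq ▸ hB B₀ hB₀ hcard

theorem sInter_smallSInters (hθ : 1 < θ) : ⋂₀ smallSInters θ B = ⋂₀ B := by
  refine subset_antisymm (sInter_subset_sInter fun A hA => ?_) ?_
  · simpa using sInter_mem_smallSInters (singleton_subset_iff.2 hA) (by simpa using hθ)
  · rintro x hx _ ⟨B₀, hB₀, -, rfl⟩
    exact sInter_subset_sInter hB₀ hx

theorem cpStable_smallSInters [TopologicalSpace X] (hB : ∀ A ∈ B, IsClosed A)
    (hBempty : ⋂₀ B = ∅) : CPStable (Ptheta θ X) (smallSInters θ B) := by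
  rintro f ⟨-, hK⟩
  obtain ⟨B₀, hB₀, hcard, hdisj⟩ :=
    hK.exists_disjoint_sInter hB (hBempty ▸ disjoint_empty _)
  refine ⟨⋂₀ B₀, sInter_mem_smallSInters hB₀ hcard, 0, fun x hx => ?_⟩
  have hfx : f x = 0 := not_not.1 fun hfx => hdisj.notMem_of_mem_right hx (subset_closure hfx)
  simp [hfx]

end smallSInters

theorem not_finallyCompact_D_cPtheta_stable_general {θ : Cardinal.{u}} (hθ : Cardinal.aleph0 ≤ θ)
    {X : Type u} [TopologicalSpace X]
    (B : Set (Set X)) (hBclosed : ∀ A ∈ B, IsClosed A)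
    (hBsmall : ∀ B₀ ⊆ B, Cardinal.mk B₀ < θ → (⋂₀ B₀).Nonempty)
    (hBempty : ⋂₀ B = ∅)
    (D : Set (Set X))
    (hD : D = {A : Set X | ∃ B₀ ⊆ B, Cardinal.mk B₀ < θ ∧ A = ⋂₀ B₀}) :
    (∀ A ∈ D, IsClosed A) ∧ CPStable (Ptheta θ X) D ∧ FIP D ∧ ⋂₀ D = ∅ ∧
      ¬ CPCompact (Ptheta θ X) := by
  change D = smallSInters θ B at hD
  subst hD
  have hclosed := isClosed_of_mem_smallSInters (θ := θ) hBclosed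
  have hstable := cpStable_smallSInters (θ := θ) hBclosed hBempty
  have hfip := fip_smallSInters hθ hBsmall
  have hempty : ⋂₀ smallSInters θ B = ∅ :=
    (sInter_smallSInters (Cardinal.one_lt_aleph0.trans_le hθ)).trans hBempty
  refine ⟨hclosed, hstable, hfip, hempty, fun hcompact => ?_⟩
  exact (hcompact _ hclosed hstable hfip).ne_empty hempty

theorem not_finallyCompact_D_cPtheta_stable {θ : Cardinal.{u}} (hθ : Cardinal.aleph0 ≤ θ)
    {X : Type u} [TopologicalSpace X] (hX : ¬ FinallyCompact θ X)
    (B : Set (Set X)) (hBclosed : ∀ A ∈ B, IsClosed A)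
    (hBsmall : ∀ B₀ ⊆ B, Cardinal.mk B₀ < θ → (⋂₀ B₀).Nonempty)
    (hBempty : ⋂₀ B = ∅)
    (D : Set (Set X))
    (hD : D = {A : Set X | ∃ B₀ ⊆ B, Cardinal.mk B₀ < θ ∧ A = ⋂₀ B₀}) :
    (∀ A ∈ D, IsClosed A) ∧ CPStable (Ptheta θ X) D ∧ FIP D ∧ ⋂₀ D = ∅ ∧
      ¬ CPCompact (Ptheta θ X) :=
  not_finallyCompact_D_cPtheta_stable_general hθ B hBclosed hBsmall hBempty D hD
end
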